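/- Let P be a p×p permutation matrix, L a p×p real unit lower-triangular matrix, Q a p×p real orthogonal matrix, and Λ = diag(λ_1, …, λ_p) a real diagonal matrix, and set H̄ = Pᵀ L Q Λ Qᵀ Lᵀ P. Assume H̄ is positive definite. Let τ > 0, let Λ̄ be the clipped diagonal matrix with entries max{τ, |λ_j|}, and set H̄̄ = Pᵀ L Q Λ̄ Qᵀ Lᵀ P. Then λ_min(H̄̄) ≥ σ_min(L)² · max{ τ, λ_min(H̄)/σ_max(L)² }, where σ_min(L) and σ_max(L) are the smallest and largest singular values of L. -/

import Mathlib

open Matrix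

/-- The Euclidean norm on `ℝ^p` (vectors identified with `Fin p → ℝ`). -/
noncomputable def euclNorm {p : ℕ} (x : Fin p → ℝ) : ℝ := Real.sqrt (∑ i, x i ^ 2)

/-- The smallest eigenvalue of a symmetric real matrix, characterized as the infimum
of the Rayleigh quotient `xᵀ A x / (xᵀ x)` over nonzero `x`. -/
noncomputable def lambdaMin {p : ℕ} (A : Matrix (Fin p) (Fin p) ℝ) : ℝ :=
  ⨅ x : {x : Fin p → ℝ // x ≠ 0}, x.1 ⬝ᵥ A.mulVec x.1 / euclNorm x.1 ^ 2

/-- The smallest singular value of a real matrix `L`, characterized as the infimum of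
`‖L x‖ / ‖x‖` over nonzero `x`. -/
noncomputable def sigmaMin {p : ℕ} (L : Matrix (Fin p) (Fin p) ℝ) : ℝ :=
  ⨅ x : {x : Fin p → ℝ // x ≠ 0}, euclNorm (L.mulVec x.1) / euclNorm x.1

/-- The largest singular value of a real matrix `L`, characterized as the supremum of
`‖L x‖ / ‖x‖` over nonzero `x`. -/
noncomputable def sigmaMax {p : ℕ} (L : Matrix (Fin p) (Fin p) ℝ) : ℝ :=
  ⨆ x : {x : Fin p → ℝ // x ≠ 0}, euclNorm (L.mulVec x.1) / euclNorm x.1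

/-!
Write `H̄ = Nᵀ Λ N` with `N = Qᵀ Lᵀ P`, so that `xᵀ H̄ x = ∑ λ_j (N x)_j²`, and likewise for the
clipped matrix. As `P` and `Q` are orthogonal, `σ_min(L) ‖x‖ ≤ ‖N x‖ ≤ σ_max(L) ‖x‖`. Testing the
Rayleigh quotient of `H̄` at `x = N⁻¹ e_j` gives `λ_min(H̄) ‖x‖² ≤ λ_j` with `‖x‖ ≥ 1 / σ_max(L)`,
so every clipped entry is at least `c = max{τ, λ_min(H̄) / σ_max(L)²}`, and then
`xᵀ H̄̄ x ≥ c ‖N x‖² ≥ c σ_min(L)² ‖x‖²`.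
-/

section EuclNorm

variable {p : ℕ}

lemma euclNorm_eq_sqrt_dotProduct (x : Fin p → ℝ) : euclNorm x = Real.sqrt (x ⬝ᵥ x) := by
  simp only [euclNorm, dotProduct, sq]

lemma euclNorm_nonneg (x : Fin p → ℝ) : 0 ≤ euclNorm x := Real.sqrt_nonneg _

lemma euclNorm_sq (x : Fin p → ℝ) : euclNorm x ^ 2 = ∑ i, x i ^ 2 :=
  Real.sq_sqrt (Finset.sum_nonneg fun i _ => sq_nonneg (x i))

lemma dotProduct_self_eq_euclNorm_sq (x : Fin p → ℝ) : x ⬝ᵥ x = euclNorm x ^ 2 := by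
  rw [euclNorm_sq]; simp only [dotProduct, sq]

lemma euclNorm_pos {x : Fin p → ℝ} (hx : x ≠ 0) : 0 < euclNorm x := by
  rw [euclNorm_eq_sqrt_dotProduct, Real.sqrt_pos]
  exact lt_of_le_of_ne (dotProduct_self_eq_euclNorm_sq x ▸ sq_nonneg _)
    (Ne.symm (dotProduct_self_eq_zero.not.mpr hx))

lemma euclNorm_single (j : Fin p) : euclNorm (Pi.single j 1 : Fin p → ℝ) = 1 := by
  simp [euclNorm, Pi.single_apply]

lemma dotProduct_le_euclNorm_mul (x y : Fin p → ℝ) : x ⬝ᵥ y ≤ euclNorm x * euclNorm y :=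
  Real.sum_mul_le_sqrt_mul_sqrt Finset.univ x y

lemma euclNorm_mulVec_of_transpose_mul_self {U : Matrix (Fin p) (Fin p) ℝ} (hU : Uᵀ * U = 1)
    (x : Fin p → ℝ) : euclNorm (U *ᵥ x) = euclNorm x := by
  rw [euclNorm_eq_sqrt_dotProduct, euclNorm_eq_sqrt_dotProduct, dotProduct_mulVec,
    vecMul_mulVec, hU, vecMul_one]

end EuclNorm

section SingularValues

variable {p : ℕ}

lemma sigmaMin_nonneg (A : Matrix (Fin p) (Fin p) ℝ) : 0 ≤ sigmaMin A :=
  Real.iInf_nonneg fun _ => div_nonneg (euclNorm_nonneg _) (euclNorm_nonneg _)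

lemma sigmaMax_nonneg (A : Matrix (Fin p) (Fin p) ℝ) : 0 ≤ sigmaMax A :=
  Real.iSup_nonneg fun _ => div_nonneg (euclNorm_nonneg _) (euclNorm_nonneg _)

lemma euclNorm_mulVec_le_sqrt_sum_sq (A : Matrix (Fin p) (Fin p) ℝ) (x : Fin p → ℝ) :
    euclNorm (A *ᵥ x) ≤ Real.sqrt (∑ i, ∑ j, A i j ^ 2) * euclNorm x := by
  rw [euclNorm, euclNorm, ← Real.sqrt_mul (Finset.sum_nonneg fun i _ =>
    Finset.sum_nonneg fun j _ => sq_nonneg (A i j)), Finset.sum_mul]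
  exact Real.sqrt_le_sqrt <| Finset.sum_le_sum fun i _ =>
    Finset.sum_mul_sq_le_sq_mul_sq Finset.univ (A i) x

lemma euclNorm_mulVec_le_sigmaMax (A : Matrix (Fin p) (Fin p) ℝ) (x : Fin p → ℝ) :
    euclNorm (A *ᵥ x) ≤ sigmaMax A * euclNorm x := by
  rcases eq_or_ne x 0 with rfl | hx
  · simp [euclNorm]
  have hbdd : BddAbove (Set.range fun y : {y : Fin p → ℝ // y ≠ 0} =>
      euclNorm (A *ᵥ y.1) / euclNorm y.1) :=
    ⟨_, Set.forall_mem_range.mpr fun y =>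
      (div_le_iff₀ (euclNorm_pos y.2)).mpr (euclNorm_mulVec_le_sqrt_sum_sq A y.1)⟩
  exact (div_le_iff₀ (euclNorm_pos hx)).mp (le_ciSup hbdd ⟨x, hx⟩)

lemma sigmaMin_mul_le_euclNorm_mulVec (A : Matrix (Fin p) (Fin p) ℝ) (x : Fin p → ℝ) :
    sigmaMin A * euclNorm x ≤ euclNorm (A *ᵥ x) := by
  rcases eq_or_ne x 0 with rfl | hx
  · simp [euclNorm]
  have hbdd : BddBelow (Set.range fun y : {y : Fin p → ℝ // y ≠ 0} =>
      euclNorm (A *ᵥ y.1) / euclNorm y.1) :=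
    ⟨0, Set.forall_mem_range.mpr fun _ => div_nonneg (euclNorm_nonneg _) (euclNorm_nonneg _)⟩
  exact (le_div_iff₀ (euclNorm_pos hx)).mp (ciInf_le hbdd ⟨x, hx⟩)

lemma euclNorm_transpose_mulVec_le_sigmaMax (A : Matrix (Fin p) (Fin p) ℝ) (y : Fin p → ℝ) :
    euclNorm (Aᵀ *ᵥ y) ≤ sigmaMax A * euclNorm y := by
  set w := Aᵀ *ᵥ y
  rcases (euclNorm_nonneg w).eq_or_lt with hw | hw
  · rw [← hw]
    exact mul_nonneg (sigmaMax_nonneg A) (euclNorm_nonneg y)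
  refine le_of_mul_le_mul_right ?_ hw
  calc euclNorm w * euclNorm w = y ⬝ᵥ A *ᵥ w := by
        rw [← sq, ← dotProduct_self_eq_euclNorm_sq, dotProduct_mulVec, vecMul_transpose, dotProduct_comm]
    _ ≤ euclNorm y * euclNorm (A *ᵥ w) := dotProduct_le_euclNorm_mul _ _
    _ ≤ euclNorm y * (sigmaMax A * euclNorm w) :=
        mul_le_mul_of_nonneg_left (euclNorm_mulVec_le_sigmaMax A w) (euclNorm_nonneg y)
    _ = sigmaMax A * euclNorm y * euclNorm w := by ring

lemma sigmaMin_mul_le_euclNorm_transpose_mulVec {A : Matrix (Fin p) (Fin p) ℝ}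
    (hA : IsUnit A.det) (y : Fin p → ℝ) : sigmaMin A * euclNorm y ≤ euclNorm (Aᵀ *ᵥ y) := by
  rcases (euclNorm_nonneg y).eq_or_lt with hy | hy
  · rw [← hy, mul_zero]
    exact euclNorm_nonneg _
  have hinv : sigmaMin A * euclNorm (A⁻¹ *ᵥ y) ≤ euclNorm y := by
    simpa [mulVec_mulVec, mul_nonsing_inv _ hA] using sigmaMin_mul_le_euclNorm_mulVec A (A⁻¹ *ᵥ y)
  refine le_of_mul_le_mul_right ?_ hy
  calc sigmaMin A * euclNorm y * euclNorm y = sigmaMin A * (Aᵀ *ᵥ y ⬝ᵥ A⁻¹ *ᵥ y) := by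
        rw [dotProduct_mulVec, vecMul_mulVec, transpose_transpose, mul_nonsing_inv _ hA, vecMul_one,
          dotProduct_self_eq_euclNorm_sq, mul_assoc, sq]
    _ ≤ sigmaMin A * (euclNorm (Aᵀ *ᵥ y) * euclNorm (A⁻¹ *ᵥ y)) :=
        mul_le_mul_of_nonneg_left (dotProduct_le_euclNorm_mul _ _) (sigmaMin_nonneg A)
    _ = euclNorm (Aᵀ *ᵥ y) * (sigmaMin A * euclNorm (A⁻¹ *ᵥ y)) := by ring
    _ ≤ euclNorm (Aᵀ *ᵥ y) * euclNorm y :=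
        mul_le_mul_of_nonneg_left hinv (euclNorm_nonneg _)

end SingularValues

section RayleighQuotient

variable {p : ℕ}

lemma lambdaMin_nonneg {A : Matrix (Fin p) (Fin p) ℝ} (hA : A.PosDef) : 0 ≤ lambdaMin A :=
  Real.iInf_nonneg fun x =>
    div_nonneg (by simpa using hA.posSemidef.dotProduct_mulVec_nonneg x.1) (sq_nonneg _)

lemma lambdaMin_mul_euclNorm_sq_le {A : Matrix (Fin p) (Fin p) ℝ} (hA : A.PosDef)
    {x : Fin p → ℝ} (hx : x ≠ 0) : lambdaMin A * euclNorm x ^ 2 ≤ x ⬝ᵥ A *ᵥ x := by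
  have hbdd : BddBelow (Set.range fun y : {y : Fin p → ℝ // y ≠ 0} =>
      y.1 ⬝ᵥ A *ᵥ y.1 / euclNorm y.1 ^ 2) :=
    ⟨0, Set.forall_mem_range.mpr fun y =>
      div_nonneg (by simpa using hA.posSemidef.dotProduct_mulVec_nonneg y.1) (sq_nonneg _)⟩
  exact (le_div_iff₀ (pow_pos (euclNorm_pos hx) 2)).mp (ciInf_le hbdd ⟨x, hx⟩)

lemma le_lambdaMin [Nonempty (Fin p)] {A : Matrix (Fin p) (Fin p) ℝ} {c : ℝ}
    (h : ∀ x, c * euclNorm x ^ 2 ≤ x ⬝ᵥ A *ᵥ x) : c ≤ lambdaMin A := by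
  have : Nonempty {x : Fin p → ℝ // x ≠ 0} :=
    ⟨⟨Pi.single (Classical.arbitrary _) 1, by simp⟩⟩
  exact le_ciInf fun x => (le_div_iff₀ (pow_pos (euclNorm_pos x.2) 2)).mpr (h x.1)

end RayleighQuotient

section DiagonalCongruence

variable {p : ℕ} {N : Matrix (Fin p) (Fin p) ℝ}

lemma dotProduct_transpose_mul_diagonal_mul_mulVec (d x : Fin p → ℝ) :
    x ⬝ᵥ (Nᵀ * diagonal d * N) *ᵥ x = ∑ j, d j * (N *ᵥ x) j ^ 2 := by
  rw [← mulVec_mulVec, ← mulVec_mulVec, dotProduct_mulVec, vecMul_transpose]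
  simp only [dotProduct, mulVec_diagonal]
  exact Finset.sum_congr rfl fun j _ => by ring

lemma lambdaMin_div_sq_le_of_transpose_mul_diagonal_mul {d : Fin p → ℝ} {b : ℝ} (hN : IsUnit N)
    (hA : (Nᵀ * diagonal d * N).PosDef) (hb : ∀ x, euclNorm (N *ᵥ x) ≤ b * euclNorm x)
    (j : Fin p) : lambdaMin (Nᵀ * diagonal d * N) / b ^ 2 ≤ d j := by
  set lam := lambdaMin (Nᵀ * diagonal d * N)
  obtain ⟨x, hx⟩ := mulVec_surjective_iff_isUnit.mpr hN (Pi.single j 1)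
  have hx0 : x ≠ 0 := by
    rintro rfl
    simpa using congrFun hx j
  have hlam : lam * euclNorm x ^ 2 ≤ d j := by
    simpa [dotProduct_transpose_mul_diagonal_mul_mulVec, hx, Pi.single_apply]
      using lambdaMin_mul_euclNorm_sq_le hA hx0
  have hone : 1 ≤ b * euclNorm x := by simpa [hx, euclNorm_single] using hb x
  have hlam0 : 0 ≤ lam := lambdaMin_nonneg hA
  refine div_le_of_le_mul₀ (sq_nonneg b) ((mul_nonneg hlam0 (sq_nonneg _)).trans hlam) ?_
  calc lam = lam * 1 := (mul_one lam).symm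
    _ ≤ lam * (b * euclNorm x) ^ 2 := mul_le_mul_of_nonneg_left (one_le_pow₀ hone) hlam0
    _ = lam * euclNorm x ^ 2 * b ^ 2 := by ring
    _ ≤ d j * b ^ 2 := mul_le_mul_of_nonneg_right hlam (sq_nonneg b)

lemma sq_mul_le_lambdaMin_of_transpose_mul_diagonal_mul [Nonempty (Fin p)] {e : Fin p → ℝ}
    {a c : ℝ} (ha0 : 0 ≤ a) (ha : ∀ x, a * euclNorm x ≤ euclNorm (N *ᵥ x)) (hc0 : 0 ≤ c)
    (hc : ∀ j, c ≤ e j) : a ^ 2 * c ≤ lambdaMin (Nᵀ * diagonal e * N) := by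
  refine le_lambdaMin fun x => ?_
  rw [dotProduct_transpose_mul_diagonal_mul_mulVec]
  calc a ^ 2 * c * euclNorm x ^ 2 = c * (a * euclNorm x) ^ 2 := by ring
    _ ≤ c * euclNorm (N *ᵥ x) ^ 2 := mul_le_mul_of_nonneg_left
        (pow_le_pow_left₀ (mul_nonneg ha0 (euclNorm_nonneg x)) (ha x) 2) hc0
    _ = ∑ j, c * (N *ᵥ x) j ^ 2 := by rw [euclNorm_sq, Finset.mul_sum]
    _ ≤ ∑ j, e j * (N *ᵥ x) j ^ 2 :=
        Finset.sum_le_sum fun j _ => mul_le_mul_of_nonneg_right (hc j) (sq_nonneg _)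

end DiagonalCongruence

theorem stmt11_general {p : ℕ} (P L Q : Matrix (Fin p) (Fin p) ℝ) (d : Fin p → ℝ)
    (τ : ℝ) (hτ : 0 < τ)
    (hP : ∃ e : Equiv.Perm (Fin p), P = e.permMatrix ℝ)
    (hLdiag : ∀ i, L i i = 1) (hLtri : ∀ i j : Fin p, i < j → L i j = 0)
    (hQ : Q * Qᵀ = 1)
    (hPD : (Pᵀ * L * Q * Matrix.diagonal d * Qᵀ * Lᵀ * P).PosDef) :
    sigmaMin L ^ 2 *
        max τ (lambdaMin (Pᵀ * L * Q * Matrix.diagonal d * Qᵀ * Lᵀ * P) / sigmaMax L ^ 2) ≤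
      lambdaMin (Pᵀ * L * Q * (Matrix.diagonal fun j => max τ |d j|) * Qᵀ * Lᵀ * P) := by
  rcases isEmpty_or_nonempty (Fin p) with hp | hp
  · have : IsEmpty {x : Fin p → ℝ // x ≠ 0} := ⟨fun x => x.2 (Subsingleton.elim _ _)⟩
    simp [sigmaMin, lambdaMin]
  have hPP : Pᵀ * P = 1 := by
    obtain ⟨σ, rfl⟩ := hP
    simp [← permMatrix_mul]
  have hL : IsUnit L.det := by
    rw [det_of_isLowerTriangular L fun i j h => hLtri i j h]
    simp [hLdiag]
  set N := Qᵀ * Lᵀ * P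
  have hN : IsUnit N := by
    rw [isUnit_iff_isUnit_det, det_mul, det_mul, det_transpose L]
    exact ((isUnit_det_of_left_inverse hQ).mul hL).mul (isUnit_det_of_left_inverse hPP)
  have hcongr : ∀ f : Fin p → ℝ, Pᵀ * L * Q * diagonal f * Qᵀ * Lᵀ * P = Nᵀ * diagonal f * N :=
    fun f => by simp only [N, transpose_mul, transpose_transpose, Matrix.mul_assoc]
  have hNx : ∀ x, euclNorm (N *ᵥ x) = euclNorm (Lᵀ *ᵥ (P *ᵥ x)) := fun x => by
    rw [← mulVec_mulVec, ← mulVec_mulVec,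
      euclNorm_mulVec_of_transpose_mul_self (by rwa [transpose_transpose])]
  have hPx : ∀ x, euclNorm (P *ᵥ x) = euclNorm x := euclNorm_mulVec_of_transpose_mul_self hPP
  rw [hcongr] at hPD
  rw [hcongr, hcongr]
  refine sq_mul_le_lambdaMin_of_transpose_mul_diagonal_mul (sigmaMin_nonneg L) (fun x => ?_)
    (hτ.le.trans (le_max_left _ _)) fun j => max_le_max le_rfl
      ((lambdaMin_div_sq_le_of_transpose_mul_diagonal_mul hN hPD (fun x => ?_) j).trans
        (le_abs_self _))
  · rw [hNx, ← hPx x]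
    exact sigmaMin_mul_le_euclNorm_transpose_mulVec hL _
  · rw [hNx, ← hPx x]
    exact euclNorm_transpose_mulVec_le_sigmaMax L _

/-- Lower eigenvalue bound of Theorem 4 of the paper: with `H̄ = Pᵀ L Q Λ Qᵀ Lᵀ P`
positive definite and `H̄̄ = Pᵀ L Q Λ̄ Qᵀ Lᵀ P` its clipped version (`λ̄_j = max{τ, |λ_j|}`,
`τ > 0`), one has `λ_min(H̄̄) ≥ σ_min(L)² max{τ, λ_min(H̄)/σ_max(L)²}`. -/
theorem stmt11 {p : ℕ} (P L Q : Matrix (Fin p) (Fin p) ℝ) (d : Fin p → ℝ)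
    (τ : ℝ) (hτ : 0 < τ)
    (hP : ∃ e : Equiv.Perm (Fin p), P = e.permMatrix ℝ)
    (hLdiag : ∀ i, L i i = 1) (hLtri : ∀ i j : Fin p, i < j → L i j = 0)
    (hQ : Q * Qᵀ = 1) (hQ' : Qᵀ * Q = 1)
    (hPD : (Pᵀ * L * Q * Matrix.diagonal d * Qᵀ * Lᵀ * P).PosDef) :
    sigmaMin L ^ 2 *
        max τ (lambdaMin (Pᵀ * L * Q * Matrix.diagonal d * Qᵀ * Lᵀ * P) / sigmaMax L ^ 2) ≤
      lambdaMin (Pᵀ * L * Q * (Matrix.diagonal fun j => max τ |d j|) * Qᵀ * Lᵀ * P) :=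
  stmt11_general P L Q d τ hτ hP hLdiag hLtri hQ hPD
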